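/- Let F be a finite set of automorphisms of T. Suppose there exist contracting self-similar subgroups G₁, G₂ of Aut(T) and finite subsets H₁ ⊆ G₁, H₂ ⊆ G₂ such that for every g ∈ F and every letter x ∈ X there exist h₁ ∈ H₁, h₂ ∈ H₂ and g' ∈ F with g|_x = h₁·g'·h₂. Then every automorphism in F is finite-state. -/

import Mathlib

open List

/-- Vertices of the rooted `d`-ary tree `T`: finite words over the alphabet
`X = Fin d`. -/
abbrev Vertex (d : ℕ) := List (Fin d)

/-- `g` is an automorphism of the rooted `d`-ary tree: a bijection of the
vertex set `X*` preserving word length and the prefix relation. -/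
def IsTreeAut {d : ℕ} (g : Equiv.Perm (Vertex d)) : Prop :=
  (∀ v : Vertex d, (g v).length = v.length) ∧
    ∀ v w : Vertex d, g v <+: g (v ++ w)

theorem IsTreeAut.prefix_mono {d : ℕ} {g : Equiv.Perm (Vertex d)} (hg : IsTreeAut g)
    {u u' : Vertex d} (h : u <+: u') : g u <+: g u' := by
  obtain ⟨t, rfl⟩ := h
  exact hg.2 u t

/-- The automorphism group `Aut(T)` of the rooted `d`-ary tree, as a subgroup
of the group of permutations of the vertex set. -/
def treeAut (d : ℕ) : Subgroup (Equiv.Perm (Vertex d)) where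
  carrier := {g | IsTreeAut g}
  one_mem' := ⟨fun _ => rfl, fun v w => ⟨w, rfl⟩⟩
  mul_mem' := by
    intro g h hg hh
    obtain ⟨hg1, hg2⟩ := hg
    obtain ⟨hh1, hh2⟩ := hh
    refine ⟨fun v => ?_, fun v w => ?_⟩
    · simp [Equiv.Perm.mul_apply, hg1, hh1]
    · obtain ⟨t, ht⟩ := hh2 v w
      simp only [Equiv.Perm.mul_apply]
      rw [← ht]
      exact hg2 (h v) t
  inv_mem' := by
    intro g hgmem
    obtain ⟨hg1, hg2⟩ := hgmem
    have hg : IsTreeAut g := ⟨hg1, hg2⟩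
    have hlen' : ∀ v : Vertex d, (g⁻¹ v).length = v.length := by
      intro v
      conv_rhs => rw [(Equiv.Perm.inv_eq_iff_eq.mp rfl : v = g (g⁻¹ v))]
      rw [hg1]
    refine ⟨hlen', fun v w => ?_⟩
    have hle : (g⁻¹ v).length ≤ (g⁻¹ (v ++ w)).length := by
      have h1 := hlen' v
      have h2 := hlen' (v ++ w)
      rw [List.length_append] at h2
      omega
    have htp : (g⁻¹ (v ++ w)).take (g⁻¹ v).length <+: g⁻¹ (v ++ w) :=
      List.take_prefix _ _
    have hgtp : g ((g⁻¹ (v ++ w)).take (g⁻¹ v).length) <+: v ++ w := by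
      have := hg.prefix_mono htp
      rwa [(Equiv.Perm.inv_eq_iff_eq.mp rfl : v ++ w = g (g⁻¹ (v ++ w))).symm] at this
    have hlen_tp : (g ((g⁻¹ (v ++ w)).take (g⁻¹ v).length)).length = v.length := by
      rw [hg1, List.length_take, min_eq_left hle, hlen' v]
    have hveq : g ((g⁻¹ (v ++ w)).take (g⁻¹ v).length) = v := by
      have h1 := List.prefix_iff_eq_take.mp hgtp
      have h2 := List.prefix_iff_eq_take.mp (List.prefix_append v w)
      rw [h1, hlen_tp]
      exact h2.symm
    have hkey : (g⁻¹ (v ++ w)).take (g⁻¹ v).length = g⁻¹ v := by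
      apply g.injective
      rw [hveq, (Equiv.Perm.inv_eq_iff_eq.mp rfl : v = g (g⁻¹ v)).symm]
    rw [← hkey]
    exact htp

open scoped Classical in
/-- The state (section) `g|_v` of `g` at the vertex `v` : the unique
automorphism satisfying `g (v ++ w) = g v ++ (g|_v) w` for all `w`. -/
noncomputable def state {d : ℕ} (g : Equiv.Perm (Vertex d)) (v : Vertex d) :
    Equiv.Perm (Vertex d) :=
  if h : Function.Bijective (fun w : Vertex d => (g (v ++ w)).drop v.length) then
    Equiv.ofBijective _ h
  else 1

/-- A finite-state automorphism: one having finitely many states.  The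
finite-state automorphisms form the group `F(X)`. -/
def FiniteState {d : ℕ} (g : Equiv.Perm (Vertex d)) : Prop :=
  (Set.range fun v : Vertex d => state g v).Finite

/-- The cardinality of the orbit `Orb_a(v)` of the vertex `v` under the cyclic
group generated by `a`. -/
noncomputable def orbitCard {d : ℕ} (a : Equiv.Perm (Vertex d)) (v : Vertex d) : ℕ :=
  Nat.card (Set.range fun n : ℤ => (a ^ n) v)

/-- The orbit-signalizer `OS(a) = { a^m|_v : v ∈ X^*, m = |Orb_a(v)| }`. -/
noncomputable def OS {d : ℕ} (a : Equiv.Perm (Vertex d)) : Set (Equiv.Perm (Vertex d)) :=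
  {s | ∃ v : Vertex d, s = state (a ^ orbitCard a v) v}

/-- `a` has finite orbit-signalizer. -/
def FiniteOS {d : ℕ} (a : Equiv.Perm (Vertex d)) : Prop := (OS a).Finite

/-- A self-similar (state-closed) subgroup. -/
def SelfSimilar {d : ℕ} (G : Subgroup (Equiv.Perm (Vertex d))) : Prop :=
  ∀ g ∈ G, ∀ v : Vertex d, state g v ∈ G

/-- A contracting group: there is a finite set `N ⊆ G` such that every
`g ∈ G` has all its states in `N` from some level on. -/
def ContractingGroup {d : ℕ} (G : Subgroup (Equiv.Perm (Vertex d))) : Prop :=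
  ∃ N : Set (Equiv.Perm (Vertex d)), N.Finite ∧ N ⊆ (G : Set (Equiv.Perm (Vertex d))) ∧
    ∀ g ∈ G, ∃ n : ℕ, ∀ v : Vertex d, n ≤ v.length → state g v ∈ N

/-- A contracting automorphism: the self-similar group generated by all of its
states is contracting. -/
def ContractingAut {d : ℕ} (f : Equiv.Perm (Vertex d)) : Prop :=
  ContractingGroup (Subgroup.closure (Set.range fun v : Vertex d => state f v))

/-- The activity sequence `θ_k(g)`: the number of vertices `v` of level `k`
whose state `g|_v` acts nontrivially on the first level `X`. -/
noncomputable def theta {d : ℕ} (g : Equiv.Perm (Vertex d)) (k : ℕ) : ℕ :=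
  Nat.card {v : Vertex d // v.length = k ∧ ∃ x : Fin d, state g v [x] ≠ [x]}

/-- A bounded automorphism: a finite-state automorphism with bounded activity
sequence.  The bounded automorphisms form the group `Pol(0)`. -/
def BoundedAut {d : ℕ} (g : Equiv.Perm (Vertex d)) : Prop :=
  FiniteState g ∧ ∃ C : ℕ, ∀ k : ℕ, theta g k ≤ C

/-- A polynomial automorphism (an element of `Pol(∞)`): a finite-state
automorphism whose activity sequence is polynomially bounded. -/
def PolyAut {d : ℕ} (g : Equiv.Perm (Vertex d)) : Prop :=
  FiniteState g ∧ ∃ p : Polynomial ℕ, ∀ k : ℕ, theta g k ≤ p.eval k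

/-- A finitary automorphism (an element of `Pol(-1)`): all states at some
level are trivial. -/
def Finitary {d : ℕ} (g : Equiv.Perm (Vertex d)) : Prop :=
  ∃ k : ℕ, ∀ v : Vertex d, v.length = k → state g v = 1

/-- A functionally recursive automorphism: a member of some finitely generated
self-similar subgroup of `Aut(T)`.  These form the group `FR(X)`. -/
def FunctionallyRecursive {d : ℕ} (g : Equiv.Perm (Vertex d)) : Prop :=
  ∃ G : Subgroup (Equiv.Perm (Vertex d)), G ≤ treeAut d ∧ SelfSimilar G ∧
    (∃ S : Set (Equiv.Perm (Vertex d)), S.Finite ∧ G = Subgroup.closure S) ∧ g ∈ G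
/-! Write a state of `g ∈ F` as `c * f * ρ⁻¹` with `f ∈ F`: passing to a child replaces `c` by a
first-level state of `c` times an element of `H₂`, and `ρ` likewise with `H₁⁻¹`. Let `S` be a
finite state-closed set containing `1`, `H` and the nucleus of the contracting group, and `L` a
level beyond which all states of products of two elements of `S` lie in the nucleus. The states at
level `L` of a product of `2L` elements of `S` are then products of `L` of them, while `L` further
steps of the recursion take such a state and multiply it by `L` elements of `S`. Hence all
coefficients stay in `S ^ (2L)`, and `g` has finitely many states. -/

open scoped Pointwise

theorem Set.Finite.pow {M : Type*} [Monoid M] {s : Set M} (hs : s.Finite) :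
    ∀ n : ℕ, (s ^ n).Finite
  | 0 => by simp
  | n + 1 => by rw [pow_succ]; exact (hs.pow n).mul hs

section TreeAut

variable {d : ℕ}

lemma IsTreeAut.inv {g : Equiv.Perm (Vertex d)} (hg : IsTreeAut g) : IsTreeAut g⁻¹ :=
  (treeAut d).inv_mem hg

lemma IsTreeAut.mul {g h : Equiv.Perm (Vertex d)} (hg : IsTreeAut g) (hh : IsTreeAut h) :
    IsTreeAut (g * h) :=
  (treeAut d).mul_mem hg hh

lemma isTreeAut_one : IsTreeAut (1 : Equiv.Perm (Vertex d)) :=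
  (treeAut d).one_mem

lemma IsTreeAut.apply_append_eq_drop {g : Equiv.Perm (Vertex d)} (hg : IsTreeAut g)
    (v w : Vertex d) : g (v ++ w) = g v ++ (g (v ++ w)).drop v.length := by
  obtain ⟨t, ht⟩ := hg.2 v w
  rw [← ht, ← hg.1 v, List.drop_left]

lemma IsTreeAut.bijective_drop_apply_append {g : Equiv.Perm (Vertex d)} (hg : IsTreeAut g)
    (v : Vertex d) : Function.Bijective fun w : Vertex d => (g (v ++ w)).drop v.length := by
  refine ⟨fun w₁ w₂ h => ?_, fun u => ?_⟩
  · have h₁ := hg.apply_append_eq_drop v w₁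
    rw [show (g (v ++ w₁)).drop v.length = (g (v ++ w₂)).drop v.length from h,
      ← hg.apply_append_eq_drop v w₂] at h₁
    exact List.append_cancel_left (g.injective h₁)
  · obtain ⟨t, ht⟩ := hg.inv.2 (g v) u
    rw [Equiv.Perm.coe_inv, Equiv.symm_apply_apply] at ht
    refine ⟨t, ?_⟩
    simp only [ht, Equiv.apply_symm_apply, ← hg.1 v, List.drop_left]

lemma state_apply {g : Equiv.Perm (Vertex d)} (hg : IsTreeAut g) (v w : Vertex d) :
    state g v w = (g (v ++ w)).drop v.length := by
  rw [state, dif_pos (hg.bijective_drop_apply_append v)]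
  rfl

lemma IsTreeAut.apply_append {g : Equiv.Perm (Vertex d)} (hg : IsTreeAut g) (v w : Vertex d) :
    g (v ++ w) = g v ++ state g v w := by
  rw [state_apply hg]
  exact hg.apply_append_eq_drop v w

lemma IsTreeAut.state {g : Equiv.Perm (Vertex d)} (hg : IsTreeAut g) (v : Vertex d) :
    IsTreeAut (state g v) := by
  refine ⟨fun w => ?_, fun u w => ?_⟩
  · rw [state_apply hg, List.length_drop, hg.1, List.length_append]
    omega
  · obtain ⟨t, ht⟩ := hg.2 (v ++ u) w
    rw [hg.apply_append v u, List.append_assoc, List.append_assoc v u w,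
      hg.apply_append v (u ++ w)] at ht
    exact ⟨t, List.append_cancel_left ht⟩

lemma selfSimilar_treeAut : SelfSimilar (treeAut d) :=
  fun _ hg v => IsTreeAut.state hg v

lemma IsTreeAut.exists_apply_singleton {g : Equiv.Perm (Vertex d)} (hg : IsTreeAut g)
    (x : Fin d) : ∃ y : Fin d, g [x] = [y] :=
  List.length_eq_one_iff.mp (hg.1 [x])

lemma state_nil (g : Equiv.Perm (Vertex d)) : state g [] = g := by
  have hb : Function.Bijective fun w : Vertex d => (g ([] ++ w)).drop ([] : Vertex d).length := by
    simpa using g.bijective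
  rw [state, dif_pos hb]
  ext w
  simp

lemma state_one (v : Vertex d) : state (1 : Equiv.Perm (Vertex d)) v = 1 := by
  ext w
  simp [state_apply isTreeAut_one]

lemma state_mul {g h : Equiv.Perm (Vertex d)} (hg : IsTreeAut g) (hh : IsTreeAut h)
    (v : Vertex d) : state (g * h) v = state g (h v) * state h v := by
  ext w
  have key := (hg.mul hh).apply_append v w
  rw [Equiv.Perm.mul_apply, Equiv.Perm.mul_apply, hh.apply_append v w,
    hg.apply_append (h v) (state h v w)] at key
  rw [Equiv.Perm.mul_apply, List.append_cancel_left key]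

lemma state_append {g : Equiv.Perm (Vertex d)} (hg : IsTreeAut g) (u v : Vertex d) :
    state g (u ++ v) = state (state g u) v := by
  ext w
  rw [state_apply hg, state_apply (hg.state u), state_apply hg, List.drop_drop,
    List.length_append, ← List.append_assoc]

lemma state_inv {g : Equiv.Perm (Vertex d)} (hg : IsTreeAut g) (v : Vertex d) :
    state g⁻¹ (g v) = (state g v)⁻¹ := by
  have key := state_mul hg.inv hg v
  rw [inv_mul_cancel, state_one] at key
  exact eq_inv_of_mul_eq_one_left key.symm

lemma state_mul_mul_inv {c f ρ : Equiv.Perm (Vertex d)} (hc : IsTreeAut c) (hf : IsTreeAut f)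
    (hρ : IsTreeAut ρ) (v : Vertex d) :
    state (c * f * ρ⁻¹) (ρ v) = state c (f v) * state f v * (state ρ v)⁻¹ := by
  rw [state_mul (hc.mul hf) hρ.inv, state_mul hc hf, Equiv.Perm.coe_inv, Equiv.symm_apply_apply,
    state_inv hρ]

end TreeAut

section Contracting

variable {d : ℕ} {G : Subgroup (Equiv.Perm (Vertex d))}

lemma ContractingGroup.finite_range_state (hc : ContractingGroup G)
    {g : Equiv.Perm (Vertex d)} (hg : g ∈ G) :
    (Set.range fun v : Vertex d => state g v).Finite := by
  obtain ⟨N, hNfin, -, hN⟩ := hc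
  obtain ⟨n, hn⟩ := hN g hg
  refine (((List.finite_length_lt (Fin d) n).image fun v => state g v).union hNfin).subset ?_
  rintro s ⟨v, rfl⟩
  rcases lt_or_ge v.length n with h | h
  · exact Or.inl ⟨v, h, rfl⟩
  · exact Or.inr (hn v h)

lemma ContractingGroup.exists_uniform (hc : ContractingGroup G) :
    ∃ N : Set (Equiv.Perm (Vertex d)), N.Finite ∧ N ⊆ G ∧
      ∀ A ⊆ (G : Set (Equiv.Perm (Vertex d))), A.Finite →
        ∃ n : ℕ, ∀ a ∈ A, ∀ v : Vertex d, n ≤ v.length → state a v ∈ N := by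
  obtain ⟨N, hNfin, hNG, hN⟩ := hc
  choose! level hlevel using hN
  refine ⟨N, hNfin, hNG, fun A hAG hA => ?_⟩
  obtain ⟨n, hn⟩ := (hA.image level).bddAbove
  exact ⟨n, fun a ha v hv => hlevel a (hAG ha) v ((hn ⟨a, ha, rfl⟩).trans hv)⟩

lemma ContractingGroup.exists_finite_stateClosed_superset (hGt : G ≤ treeAut d)
    (hss : SelfSimilar G) (hc : ContractingGroup G) {A : Set (Equiv.Perm (Vertex d))}
    (hA : A.Finite) (hAG : A ⊆ G) :
    ∃ S : Set (Equiv.Perm (Vertex d)), S.Finite ∧ A ⊆ S ∧ S ⊆ G ∧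
      ∀ s ∈ S, ∀ v : Vertex d, state s v ∈ S := by
  refine ⟨⋃ a ∈ A, Set.range fun v => state a v,
    hA.biUnion fun a ha => hc.finite_range_state (hAG ha), fun a ha => ?_, ?_, ?_⟩
  · exact Set.mem_biUnion ha ⟨[], state_nil a⟩
  · simp only [Set.iUnion_subset_iff]
    rintro a ha _ ⟨v, rfl⟩
    exact hss a (hAG ha) v
  · simp only [Set.mem_iUnion]
    rintro _ ⟨a, ha, u, rfl⟩ v
    exact ⟨a, ha, u ++ v, state_append (hGt (hAG ha)) u v⟩

end Contracting

section Products

variable {d : ℕ} {S : Set (Equiv.Perm (Vertex d))}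

lemma state_mem_pow (hSt : S ⊆ treeAut d) (hS : ∀ s ∈ S, ∀ v : Vertex d, state s v ∈ S) :
    ∀ (m : ℕ) {p : Equiv.Perm (Vertex d)}, p ∈ S ^ m → ∀ v : Vertex d, state p v ∈ S ^ m
  | 0, p, hp, v => by
    rw [pow_zero, Set.mem_one] at hp ⊢
    rw [hp, state_one]
  | m + 1, _, hp, v => by
    rw [pow_succ] at hp ⊢
    obtain ⟨q, hq, s, hs, rfl⟩ := Set.mem_mul.mp hp
    rw [state_mul (Subgroup.pow_subset hSt hq) (hSt hs)]
    exact Set.mul_mem_mul (state_mem_pow hSt hS m hq (s v)) (hS s hs v)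

lemma state_mem_pow_of_mem_pow_two_mul (hSt : S ⊆ treeAut d) {L : ℕ}
    (hpair : ∀ p ∈ S * S, ∀ v : Vertex d, L ≤ v.length → state p v ∈ S) :
    ∀ (m : ℕ) {p : Equiv.Perm (Vertex d)}, p ∈ S ^ (2 * m) →
      ∀ v : Vertex d, L ≤ v.length → state p v ∈ S ^ m
  | 0, p, hp, v, _ => by
    rw [pow_zero, Set.mem_one] at hp ⊢
    rw [hp, state_one]
  | m + 1, _, hp, v, hv => by
    rw [Nat.mul_succ, pow_add, sq] at hp
    rw [pow_succ]
    obtain ⟨p, hp', q, hq, rfl⟩ := Set.mem_mul.mp hp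
    have hqt : IsTreeAut q := Subgroup.mul_subset hSt hSt hq
    rw [state_mul (Subgroup.pow_subset hSt hp') hqt]
    exact Set.mul_mem_mul
      (state_mem_pow_of_mem_pow_two_mul hSt hpair m hp' (q v) (by rwa [hqt.1 v]))
      (hpair q hq v hv)

end Products

section StateStep

variable {d : ℕ}

def stateStep (H A : Set (Equiv.Perm (Vertex d))) : Set (Equiv.Perm (Vertex d)) :=
  {c | ∃ a ∈ A, ∃ y : Fin d, ∃ h ∈ H, c = state a [y] * h}

lemma iterate_stateStep_subset {G : Subgroup (Equiv.Perm (Vertex d))} (hss : SelfSimilar G)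
    {H A : Set (Equiv.Perm (Vertex d))} (hHG : H ⊆ G) (hAG : A ⊆ G) :
    ∀ n : ℕ, (stateStep H)^[n] A ⊆ G
  | 0 => hAG
  | n + 1 => by
    rw [Function.iterate_succ_apply']
    rintro _ ⟨a, ha, y, h, hh, rfl⟩
    exact G.mul_mem (hss a (iterate_stateStep_subset hss hHG hAG n ha) [y]) (hHG hh)

lemma exists_eq_state_mul_of_mem_iterate_stateStep {H A S : Set (Equiv.Perm (Vertex d))}
    (hAt : A ⊆ treeAut d) (hSt : S ⊆ treeAut d) (hHS : H ⊆ S)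
    (hS : ∀ s ∈ S, ∀ v : Vertex d, state s v ∈ S) :
    ∀ (k : ℕ) {c : Equiv.Perm (Vertex d)}, c ∈ (stateStep H)^[k] A →
      ∃ a ∈ A, ∃ w : Vertex d, w.length = k ∧ ∃ e ∈ S ^ k, c = state a w * e
  | 0, c, hc => ⟨c, hc, [], rfl, 1, rfl, by rw [state_nil, mul_one]⟩
  | k + 1, _, hc => by
    rw [Function.iterate_succ_apply'] at hc
    obtain ⟨_, hc, y, h, hh, rfl⟩ := hc
    obtain ⟨a, ha, w, hw, e, he, rfl⟩ :=
      exists_eq_state_mul_of_mem_iterate_stateStep hAt hSt hHS hS k hc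
    have het : IsTreeAut e := Subgroup.pow_subset hSt he
    refine ⟨a, ha, w ++ e [y], by simp [het.1, hw], state e [y] * h,
      by rw [pow_succ]; exact Set.mul_mem_mul (state_mem_pow hSt hS _ he [y]) (hHS hh), ?_⟩
    rw [state_mul ((hAt ha).state w) het, ← state_append (hAt ha), mul_assoc]

theorem ContractingGroup.exists_finite_iterate_stateStep_subset
    {G : Subgroup (Equiv.Perm (Vertex d))} (hGt : G ≤ treeAut d) (hss : SelfSimilar G)
    (hc : ContractingGroup G) {H : Set (Equiv.Perm (Vertex d))} (hH : H.Finite) (hHG : H ⊆ G) :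
    ∃ C : Set (Equiv.Perm (Vertex d)), C.Finite ∧ ∀ n : ℕ, (stateStep H)^[n] {1} ⊆ C := by
  obtain ⟨N, hNfin, hNG, hN⟩ := hc.exists_uniform
  obtain ⟨S, hSfin, hNHS, hSG, hS⟩ := hc.exists_finite_stateClosed_superset hGt hss
    ((hNfin.union hH).insert 1) (Set.insert_subset G.one_mem (Set.union_subset hNG hHG))
  have hSt : S ⊆ treeAut d := hSG.trans hGt
  have h1S : (1 : Equiv.Perm (Vertex d)) ∈ S := hNHS (Set.mem_insert _ _)
  have hHS : H ⊆ S := fun h hh => hNHS (Or.inr (Or.inr hh))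
  obtain ⟨L, hL⟩ := hN (S * S) (Subgroup.mul_subset hSG hSG) (hSfin.mul hSfin)
  -- Level `L + 1` rather than `L`, so that the induction below always peels off a nonempty block.
  have hpair : ∀ p ∈ S * S, ∀ v : Vertex d, L + 1 ≤ v.length → state p v ∈ S :=
    fun p hp v hv => hNHS (Or.inr (Or.inl (hL p hp v (by omega))))
  refine ⟨S ^ (2 * (L + 1)), hSfin.pow _, fun n => ?_⟩
  induction n using Nat.strong_induction_on with
  | _ n ih =>
    rcases lt_or_ge n (L + 1) with hn | hn
    · intro c hc
      obtain ⟨_, rfl, w, -, e, he, rfl⟩ := exists_eq_state_mul_of_mem_iterate_stateStep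
        (Set.singleton_subset_iff.mpr isTreeAut_one) hSt hHS hS n hc
      rw [state_one, one_mul]
      exact Set.pow_subset_pow_right h1S (by omega) he
    · obtain ⟨k, rfl⟩ := Nat.exists_eq_add_of_le hn
      have hk := ih k (by omega)
      intro c hc
      rw [Function.iterate_add_apply] at hc
      obtain ⟨a, ha, w, hw, e, he, rfl⟩ := exists_eq_state_mul_of_mem_iterate_stateStep
        (hk.trans (Subgroup.pow_subset hSt)) hSt hHS hS (L + 1) hc
      rw [two_mul, pow_add]
      exact Set.mul_mem_mul
        (state_mem_pow_of_mem_pow_two_mul hSt hpair (L + 1) (hk ha) w hw.ge) he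

end StateStep

lemma exists_state_eq_mul_mul_inv {d : ℕ} {F H₁ H₂ : Set (Equiv.Perm (Vertex d))}
    (hFaut : ∀ g ∈ F, IsTreeAut g) (hH₁ : H₁ ⊆ treeAut d) (hH₂ : H₂ ⊆ treeAut d)
    (hrec : ∀ g ∈ F, ∀ x : Fin d, ∃ h₁ ∈ H₁, ∃ h₂ ∈ H₂, ∃ g' ∈ F,
      state g ([x] : Vertex d) = h₂ * g' * h₁)
    {g : Equiv.Perm (Vertex d)} (hg : g ∈ F) (v : Vertex d) :
    ∃ c ∈ (stateStep H₂)^[v.length] {1}, ∃ f ∈ F, ∃ ρ ∈ (stateStep H₁⁻¹)^[v.length] {1},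
      state g v = c * f * ρ⁻¹ := by
  induction v using List.reverseRecOn with
  | nil => exact ⟨1, rfl, g, hg, 1, rfl, by rw [state_nil, one_mul, inv_one, mul_one]⟩
  | append_singleton u x ih =>
    obtain ⟨c, hc, f, hf, ρ, hρ, hu⟩ := ih
    have hct : IsTreeAut c := iterate_stateStep_subset selfSimilar_treeAut hH₂
      (Set.singleton_subset_iff.mpr isTreeAut_one) _ hc
    have hρt : IsTreeAut ρ := iterate_stateStep_subset selfSimilar_treeAut
      (fun h hh => (treeAut d).inv_mem_iff.mp (hH₁ hh))
      (Set.singleton_subset_iff.mpr isTreeAut_one) _ hρ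
    obtain ⟨x', hx'⟩ := hρt.inv.exists_apply_singleton x
    obtain ⟨h₁, hh₁, h₂, hh₂, f', hf', hfx'⟩ := hrec f hf x'
    obtain ⟨z, hz⟩ := (hFaut f hf).exists_apply_singleton x'
    simp only [List.length_append, List.length_singleton, Function.iterate_succ_apply']
    refine ⟨state c [z] * h₂, ⟨c, hc, z, h₂, hh₂, rfl⟩, f', hf',
      state ρ [x'] * h₁⁻¹, ⟨ρ, hρ, x', h₁⁻¹, Set.inv_mem_inv.mpr hh₁, rfl⟩, ?_⟩
    have hx : ([x] : Vertex d) = ρ [x'] := by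
      rw [← hx', Equiv.Perm.coe_inv, Equiv.apply_symm_apply]
    rw [state_append (hFaut g hg), hu, hx, state_mul_mul_inv hct (hFaut f hf) hρt, hz, hfx']
    group

theorem finiteState_of_selfRecursion_with_contracting_coefficients_general
    (d : ℕ)
    (F : Set (Equiv.Perm (Vertex d))) (hF : F.Finite) (hFaut : ∀ g ∈ F, IsTreeAut g)
    (G₁ G₂ : Subgroup (Equiv.Perm (Vertex d)))
    (hG₁ : G₁ ≤ treeAut d) (hss₁ : SelfSimilar G₁) (hc₁ : ContractingGroup G₁)
    (hG₂ : G₂ ≤ treeAut d) (hss₂ : SelfSimilar G₂) (hc₂ : ContractingGroup G₂)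
    (H₁ H₂ : Set (Equiv.Perm (Vertex d))) (hH₁ : H₁.Finite) (hH₂ : H₂.Finite)
    (hH₁G : H₁ ⊆ (G₁ : Set _)) (hH₂G : H₂ ⊆ (G₂ : Set _))
    (hrec : ∀ g ∈ F, ∀ x : Fin d, ∃ h₁ ∈ H₁, ∃ h₂ ∈ H₂, ∃ g' ∈ F,
      state g ([x] : Vertex d) = h₂ * g' * h₁) :
    ∀ g ∈ F, FiniteState g := by
  have hH₁G' : H₁⁻¹ ⊆ (G₁ : Set _) := fun h hh => G₁.inv_mem_iff.mp (hH₁G hh)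
  obtain ⟨C₁, hC₁, hC₁n⟩ := hc₁.exists_finite_iterate_stateStep_subset hG₁ hss₁ hH₁.inv hH₁G'
  obtain ⟨C₂, hC₂, hC₂n⟩ := hc₂.exists_finite_iterate_stateStep_subset hG₂ hss₂ hH₂ hH₂G
  intro g hg
  refine ((hC₂.mul hF).mul hC₁.inv).subset ?_
  rintro _ ⟨v, rfl⟩
  obtain ⟨c, hc, f, hf, ρ, hρ, hv⟩ := exists_state_eq_mul_mul_inv hFaut
    (hH₁G.trans hG₁) (hH₂G.trans hG₂) hrec hg v
  show state g v ∈ _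
  rw [hv]
  exact Set.mul_mem_mul (Set.mul_mem_mul (hC₂n _ hc) hf) (Set.inv_mem_inv.mpr (hC₁n _ hρ))

/-- Let `F` be a finite set of automorphisms of `T`.  Suppose
there are contracting self-similar subgroups `G₁, G₂` of `Aut(T)` and finite
subsets `H₁ ⊆ G₁`, `H₂ ⊆ G₂` such that every first-level state of every `g ∈ F`
has the form `h₁·g'·h₂` (in the left-action convention, `h₂ * g' * h₁`) with
`h₁ ∈ H₁`, `h₂ ∈ H₂`, `g' ∈ F`.  Then every automorphism in `F` is
finite-state. -/
theorem finiteState_of_selfRecursion_with_contracting_coefficients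
    (d : ℕ) (hd : 2 ≤ d)
    (F : Set (Equiv.Perm (Vertex d))) (hF : F.Finite) (hFaut : ∀ g ∈ F, IsTreeAut g)
    (G₁ G₂ : Subgroup (Equiv.Perm (Vertex d)))
    (hG₁ : G₁ ≤ treeAut d) (hss₁ : SelfSimilar G₁) (hc₁ : ContractingGroup G₁)
    (hG₂ : G₂ ≤ treeAut d) (hss₂ : SelfSimilar G₂) (hc₂ : ContractingGroup G₂)
    (H₁ H₂ : Set (Equiv.Perm (Vertex d))) (hH₁ : H₁.Finite) (hH₂ : H₂.Finite)
    (hH₁G : H₁ ⊆ (G₁ : Set _)) (hH₂G : H₂ ⊆ (G₂ : Set _))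
    (hrec : ∀ g ∈ F, ∀ x : Fin d, ∃ h₁ ∈ H₁, ∃ h₂ ∈ H₂, ∃ g' ∈ F,
      state g ([x] : Vertex d) = h₂ * g' * h₁) :
    ∀ g ∈ F, FiniteState g :=
  finiteState_of_selfRecursion_with_contracting_coefficients_general d F hF hFaut G₁ G₂ hG₁ hss₁ hc₁
    hG₂ hss₂ hc₂ H₁ H₂ hH₁ hH₂ hH₁G hH₂G hrec
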